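/- arXiv:math/9902013 — 3 statements merged into one kernel-verified Lean document; each statement's English description precedes it below -/
import Mathlib

section
/- Let n ≥ 3 and let λ : 𝕋ⁿ → ℝ be a smooth positive function on the torus. If ∫_{𝕋ⁿ} ( (1/(2λ)) Δλ − (1/(2λ²)) |∇λ|² ) λ^{−n/2} dq ≤ 0, then λ is constant. -/
open MeasureTheory Real Filter Matrix

noncomputable section

/-- Partial derivative of `f` in the `i`-th coordinate direction. -/
def pd {n : ℕ} (i : Fin n) (f : (Fin n → ℝ) → ℝ) (x : Fin n → ℝ) : ℝ :=
  fderiv ℝ f x (Pi.single i 1)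

/-- `f : ℝⁿ → ℝ` is ℤⁿ-periodic, i.e. descends to the torus 𝕋ⁿ = ℝⁿ/ℤⁿ. -/
def Zperiodic {n : ℕ} (f : (Fin n → ℝ) → ℝ) : Prop :=
  ∀ (x : Fin n → ℝ) (m : Fin n → ℤ), f (x + fun i => (m i : ℝ)) = f x

/-- Fundamental domain of the torus 𝕋ⁿ = ℝⁿ/ℤⁿ. -/
def cube (n : ℕ) : Set (Fin n → ℝ) := Set.univ.pi fun _ => Set.Ioc (0:ℝ) 1

/-- Euclidean Laplacian Δf = Σᵢ ∂²f/∂qᵢ². -/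
def lap {n : ℕ} (f : (Fin n → ℝ) → ℝ) (x : Fin n → ℝ) : ℝ := ∑ i, pd i (pd i f) x

/-- Squared Euclidean norm of the gradient, |∇f|² = Σᵢ (∂f/∂qᵢ)². -/
def gradSq {n : ℕ} (f : (Fin n → ℝ) → ℝ) (x : Fin n → ℝ) : ℝ := ∑ i, (pd i f x) ^ 2

/-- Partial derivative in the `i`-th momentum variable of `H(p,q)`. -/
def pdP {n : ℕ} (i : Fin n) (H : (Fin n → ℝ) → (Fin n → ℝ) → ℝ)
    (p q : Fin n → ℝ) : ℝ := fderiv ℝ (fun p' => H p' q) p (Pi.single i 1)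

/-- Partial derivative in the `j`-th position variable of `H(p,q)`. -/
def pdQ {n : ℕ} (j : Fin n) (H : (Fin n → ℝ) → (Fin n → ℝ) → ℝ)
    (p q : Fin n → ℝ) : ℝ := fderiv ℝ (fun q' => H p q') q (Pi.single j 1)

/-- (H_pp)ᵢⱼ = ∂²H/∂pᵢ∂pⱼ. -/
def Hpp {n : ℕ} (H : (Fin n → ℝ) → (Fin n → ℝ) → ℝ) (p q : Fin n → ℝ) :
    Matrix (Fin n) (Fin n) ℝ := Matrix.of fun i j => pdP i (pdP j H) p q

/-- (H_pq)ᵢⱼ = ∂²H/∂pᵢ∂qⱼ. -/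
def Hpq {n : ℕ} (H : (Fin n → ℝ) → (Fin n → ℝ) → ℝ) (p q : Fin n → ℝ) :
    Matrix (Fin n) (Fin n) ℝ := Matrix.of fun i j => pdP i (pdQ j H) p q

/-- (H_qp)ᵢⱼ = ∂²H/∂qᵢ∂pⱼ. -/
def Hqp {n : ℕ} (H : (Fin n → ℝ) → (Fin n → ℝ) → ℝ) (p q : Fin n → ℝ) :
    Matrix (Fin n) (Fin n) ℝ := Matrix.of fun i j => pdQ i (pdP j H) p q

/-- (H_qq)ᵢⱼ = ∂²H/∂qᵢ∂qⱼ. -/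
def Hqq {n : ℕ} (H : (Fin n → ℝ) → (Fin n → ℝ) → ℝ) (p q : Fin n → ℝ) :
    Matrix (Fin n) (Fin n) ℝ := Matrix.of fun i j => pdQ i (pdQ j H) p q

/-- Jacobian matrix (Dα)ᵢⱼ = ∂αᵢ/∂qⱼ of a 1-form α on the torus. -/
def Dmat {n : ℕ} (α : (Fin n → ℝ) → (Fin n → ℝ)) (q : Fin n → ℝ) :
    Matrix (Fin n) (Fin n) ℝ := Matrix.of fun i j => pd j (fun x => α x i) q

lemma contDiff_pd {n : ℕ} (i : Fin n) {f : (Fin n → ℝ) → ℝ} (hf : ContDiff ℝ (⊤ : ℕ∞) f) :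
    ContDiff ℝ (⊤ : ℕ∞) (pd i f) := by
  show ContDiff ℝ (⊤ : ℕ∞) fun x => fderiv ℝ f x (Pi.single i 1)
  exact (ContinuousLinearMap.apply ℝ ℝ (Pi.single i (1:ℝ))).contDiff.comp
    (hf.fderiv_right (m := (⊤ : ℕ∞)) (by simp))

lemma fderiv_zperiodic {n : ℕ} {f : (Fin n → ℝ) → ℝ} (hf : Differentiable ℝ f)
    (hp : Zperiodic f) (x : Fin n → ℝ) (m : Fin n → ℤ) :
    fderiv ℝ f (x + fun i => (m i : ℝ)) = fderiv ℝ f x := by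
  set c : Fin n → ℝ := fun i => (m i : ℝ) with hc
  have h1 : HasFDerivAt (fun y : Fin n → ℝ => y + c)
      (ContinuousLinearMap.id ℝ (Fin n → ℝ)) x := (hasFDerivAt_id x).add_const c
  have h2 := ((hf (x + c)).hasFDerivAt).comp x h1
  have h4 : (f ∘ fun y => y + c) = f := funext fun y => hp y m
  rw [h4] at h2
  rw [h2.fderiv, ContinuousLinearMap.comp_id]

lemma pd_zperiodic {n : ℕ} (i : Fin n) {f : (Fin n → ℝ) → ℝ} (hf : Differentiable ℝ f)
    (hp : Zperiodic f) : Zperiodic (pd i f) := fun x m => by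
  unfold pd; rw [fderiv_zperiodic hf hp x m]

/-- if the integral is ≤ 0 (n ≥ 3), then λ is constant. -/
theorem stmt_1 {n : ℕ} (hn : 3 ≤ n) (l : (Fin n → ℝ) → ℝ) (hsmooth : ContDiff ℝ (⊤ : ℕ∞) l)
    (hpos : ∀ x, 0 < l x) (hper : Zperiodic l)
    (hle : ∫ q in cube n,
        ((1 / (2 * l q)) * lap l q - (1 / (2 * (l q) ^ 2)) * gradSq l q) *
          l q ^ (-(n : ℝ) / 2) ≤ 0) :
    ∀ x y, l x = l y := by
  obtain ⟨N, rfl⟩ : ∃ N, n = N + 1 := ⟨n - 1, by omega⟩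
  set e : ℝ := -((N + 1 : ℕ) : ℝ) / 2 with he
  have heneg : e < 0 := by
    have : (0:ℝ) < ((N + 1 : ℕ) : ℝ) := by positivity
    rw [he]; linarith
  have hne : ∀ x, l x ≠ 0 := fun x => (hpos x).ne'
  have hld : Differentiable ℝ l := hsmooth.differentiable (by simp)
  have hpd : ∀ i : Fin (N + 1), ContDiff ℝ (⊤ : ℕ∞) (pd i l) := fun i => contDiff_pd i hsmooth
  have hpdd : ∀ i : Fin (N + 1), Differentiable ℝ (pd i l) :=
    fun i => (hpd i).differentiable (by simp)
  have hrpow : ∀ c : ℝ, ContDiff ℝ (⊤ : ℕ∞) (fun x => l x ^ c) := by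
    intro c
    rw [contDiff_iff_contDiffAt]
    intro x
    exact (Real.contDiffAt_rpow_const_of_ne (hne x)).comp x hsmooth.contDiffAt
  -- continuity facts
  have hlapc : Continuous (lap l) := by
    unfold lap
    exact continuous_finset_sum _ fun i _ => (contDiff_pd i (hpd i)).continuous
  have hgsc : Continuous (gradSq l) := by
    unfold gradSq
    exact continuous_finset_sum _ fun i _ => ((hpd i).continuous.pow 2)
  -- the vector field
  set F : (Fin (N + 1) → ℝ) → (Fin (N + 1) → ℝ) :=
    fun x i => l x ^ (e - 1) * pd i l x with hF
  have hFci : ∀ i : Fin (N + 1), ContDiff ℝ (⊤ : ℕ∞) (fun x => F x i) :=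
    fun i => (hrpow (e - 1)).mul (hpd i)
  have hFc : ContDiff ℝ (⊤ : ℕ∞) F := contDiff_pi.mpr hFci
  have hFd : Differentiable ℝ F := hFc.differentiable (by simp)
  -- derivative of components
  have hderiv : ∀ (i : Fin (N + 1)) x, HasFDerivAt (fun y => F y i)
      ((l x ^ (e - 1)) • fderiv ℝ (pd i l) x +
        (pd i l x) • (((e - 1) * l x ^ (e - 1 - 1)) • fderiv ℝ l x)) x :=
    fun i x => ((hld x).hasFDerivAt.rpow_const (Or.inl (hne x))).mul (hpdd i x).hasFDerivAt
  -- divergence pointwise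
  have hdivpt : ∀ x, (∑ i, fderiv ℝ F x (Pi.single i 1) i)
      = (e - 1) * l x ^ (e - 2) * gradSq l x + l x ^ (e - 1) * lap l x := by
    intro x
    have h1 : fderiv ℝ F x =
        ContinuousLinearMap.pi (fun i => fderiv ℝ (fun y => F y i) x) :=
      fderiv_pi (fun i => ((hFci i).differentiable (by simp)) x)
    calc ∑ i, fderiv ℝ F x (Pi.single i 1) i
        = ∑ i, (l x ^ (e - 1) * pd i (pd i l) x
            + (e - 1) * l x ^ (e - 2) * (pd i l x) ^ 2) := by
          refine Finset.sum_congr rfl fun i _ => ?_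
          rw [h1]
          simp only [ContinuousLinearMap.pi_apply]
          rw [(hderiv i x).fderiv]
          have : e - 1 - 1 = e - 2 := by ring
          simp only [ContinuousLinearMap.add_apply, ContinuousLinearMap.smul_apply, this,
            smul_eq_mul]
          show l x ^ (e-1) * pd i (pd i l) x + pd i l x * ((e-1) * l x ^ (e-2) * pd i l x)
            = _
          ring
      _ = (e - 1) * l x ^ (e - 2) * gradSq l x + l x ^ (e - 1) * lap l x := by
          rw [Finset.sum_add_distrib]
          simp only [lap, gradSq, Finset.mul_sum]
          rw [add_comm]
  -- divergence as a continuous function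
  set D : (Fin (N + 1) → ℝ) → ℝ :=
    fun x => (e - 1) * l x ^ (e - 2) * gradSq l x + l x ^ (e - 1) * lap l x with hD
  have hDc : Continuous D :=
    ((continuous_const.mul (hrpow (e - 2)).continuous).mul hgsc).add
      ((hrpow (e - 1)).continuous.mul hlapc)
  have hDi : IntegrableOn D (Set.Icc (fun _ => (0:ℝ)) (fun _ => (1:ℝ))) volume :=
    hDc.continuousOn.integrableOn_compact isCompact_Icc
  -- divergence theorem
  have key := MeasureTheory.integral_divergence_of_hasFDerivAt_off_countable
    (a := fun _ : Fin (N + 1) => (0:ℝ)) (b := fun _ => (1:ℝ))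
    (fun i => zero_le_one) F (fun x => fderiv ℝ F x) ∅ Set.countable_empty
    hFc.continuous.continuousOn
    (fun x _ => (hFd x).hasFDerivAt)
    (hDi.congr_fun (fun x _ => (hdivpt x).symm) measurableSet_Icc)
  -- boundary terms vanish
  have hins : ∀ (i : Fin (N + 1)) (x : Fin N → ℝ),
      i.insertNth (1:ℝ) x
        = (i.insertNth (0:ℝ) x) + fun j => (((Pi.single i 1 : Fin (N+1) → ℤ)) j : ℝ) := by
    intro i x
    funext j
    rcases eq_or_ne j i with rfl | hj
    · simp
    · obtain ⟨k, rfl⟩ := Fin.exists_succAbove_eq hj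
      simp [Fin.insertNth_apply_succAbove, Pi.single_eq_of_ne (Fin.succAbove_ne i k)]
  have hFper : ∀ i : Fin (N + 1), Zperiodic (fun x => F x i) := by
    intro i x m
    show l _ ^ (e-1) * pd i l _ = l x ^ (e-1) * pd i l x
    rw [hper x m, pd_zperiodic i hld hper x m]
  have hdiv0 : (∫ x in Set.Icc (fun _ : Fin (N+1) => (0:ℝ)) (fun _ => (1:ℝ)),
      ∑ i, fderiv ℝ F x (Pi.single i 1) i) = 0 := by
    rw [key]
    refine Finset.sum_eq_zero fun i _ => ?_
    have hfun : (fun x : Fin N → ℝ => F (i.insertNth ((fun _ : Fin (N+1) => (1:ℝ)) i) x) i)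
        = fun x => F (i.insertNth ((fun _ : Fin (N+1) => (0:ℝ)) i) x) i := by
      funext x
      show F (i.insertNth (1:ℝ) x) i = F (i.insertNth (0:ℝ) x) i
      rw [hins i x]
      exact hFper i (i.insertNth 0 x) (Pi.single i 1)
    rw [hfun, sub_self]
  -- two basic integrals
  set P : (Fin (N + 1) → ℝ) → ℝ := fun x => l x ^ (e - 1) * lap l x with hP
  set Q : (Fin (N + 1) → ℝ) → ℝ := fun x => l x ^ (e - 2) * gradSq l x with hQ
  have hPc : Continuous P := (hrpow (e - 1)).continuous.mul hlapc
  have hQc : Continuous Q := (hrpow (e - 2)).continuous.mul hgsc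
  set Box : Set (Fin (N + 1) → ℝ) := Set.Icc (fun _ => (0:ℝ)) (fun _ => (1:ℝ)) with hBox
  have hPi : IntegrableOn P Box volume := hPc.continuousOn.integrableOn_compact isCompact_Icc
  have hQi : IntegrableOn Q Box volume := hQc.continuousOn.integrableOn_compact isCompact_Icc
  -- divergence integral in terms of A and B
  have hAB : (∫ x in Box, P x) + (e - 1) * ∫ x in Box, Q x = 0 := by
    have h1 : (∫ x in Box, ∑ i, fderiv ℝ F x (Pi.single i 1) i)
        = ∫ x in Box, (P x + (e - 1) * Q x) := by
      refine setIntegral_congr_fun measurableSet_Icc fun x _ => ?_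
      rw [hdivpt x]; simp only [hP, hQ]; ring
    rw [h1] at hdiv0
    rw [integral_add hPi (hQi.const_mul _)] at hdiv0
    rw [integral_const_mul] at hdiv0
    linarith [hdiv0]
  -- hypothesis integral over the box
  have hcube : cube (N + 1) =ᵐ[(volume : Measure (Fin (N+1) → ℝ))] Box := by
    rw [hBox]
    rw [show (volume : Measure (Fin (N+1) → ℝ)) = Measure.pi fun _ => volume from volume_pi]
    exact MeasureTheory.Measure.univ_pi_Ioc_ae_eq_Icc
      (μ := fun _ : Fin (N+1) => (volume : Measure ℝ))
      (f := fun _ => (0:ℝ)) (g := fun _ => (1:ℝ))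
  have hptP : ∀ q : Fin (N+1) → ℝ,
      ((1 / (2 * l q)) * lap l q - (1 / (2 * (l q) ^ 2)) * gradSq l q) *
          l q ^ (-((N + 1 : ℕ) : ℝ) / 2)
        = (1/2) * P q - (1/2) * Q q := by
    intro q
    have h1 : l q ^ (e - 1) = l q ^ e / l q := by
      rw [Real.rpow_sub (hpos q), Real.rpow_one]
    have h2 : l q ^ (e - 2) = l q ^ e / (l q) ^ 2 := by
      rw [Real.rpow_sub (hpos q), show (2:ℝ) = ((2:ℕ):ℝ) by norm_num, Real.rpow_natCast]
    simp only [hP, hQ, h1, h2, ← he]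
    have hl := hne q
    field_simp
  have hle2 : (1/2) * (∫ x in Box, P x) - (1/2) * (∫ x in Box, Q x) ≤ 0 := by
    have h0 : (∫ q in cube (N+1),
        ((1 / (2 * l q)) * lap l q - (1 / (2 * (l q) ^ 2)) * gradSq l q) *
          l q ^ (-((N + 1 : ℕ) : ℝ) / 2))
        = ∫ x in Box, ((1/2) * P x - (1/2) * Q x) := by
      rw [setIntegral_congr_set hcube]
      exact setIntegral_congr_fun measurableSet_Icc fun x _ => hptP x
    rw [h0] at hle
    rw [integral_sub (hPi.const_mul _) (hQi.const_mul _),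
      integral_const_mul, integral_const_mul] at hle
    exact hle
  -- positivity of Q and conclusion B = 0
  have hQnn : ∀ x, 0 ≤ Q x := fun x =>
    mul_nonneg (Real.rpow_nonneg (hpos x).le _)
      (Finset.sum_nonneg fun i _ => sq_nonneg _)
  have hBnn : 0 ≤ ∫ x in Box, Q x := setIntegral_nonneg measurableSet_Icc fun x _ => hQnn x
  have hB0 : (∫ x in Box, Q x) = 0 := by nlinarith [hAB, hle2, hBnn, heneg]
  -- Q vanishes a.e. on the box
  have hQae : Q =ᵐ[volume.restrict Box] 0 := by
    rw [← MeasureTheory.integral_eq_zero_iff_of_nonneg_ae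
      (Filter.Eventually.of_forall fun x => hQnn x) hQi]
    exact hB0
  have hnull : volume {x | x ∈ Box ∧ Q x ≠ 0} = 0 := by
    have h := (ae_restrict_iff' measurableSet_Icc).mp hQae
    rw [ae_iff] at h
    convert h using 2
    ext x
    simp only [Set.mem_setOf_eq, Pi.zero_apply]
    tauto
  -- Q vanishes on the open box
  set U0 : Set (Fin (N+1) → ℝ) := Set.univ.pi fun _ => Set.Ioo (0:ℝ) 1 with hU0
  have hU0open : IsOpen U0 := isOpen_set_pi Set.finite_univ fun _ _ => isOpen_Ioo
  have hU0sub : U0 ⊆ Box := by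
    rw [hBox, ← Set.pi_univ_Icc]
    exact Set.pi_mono fun i _ => Set.Ioo_subset_Icc_self
  have hQ0open : ∀ x ∈ U0, Q x = 0 := by
    intro x hx
    by_contra hqx
    have hUopen : IsOpen (U0 ∩ {y | Q y ≠ 0}) :=
      hU0open.inter (isOpen_ne_fun hQc continuous_const)
    have hpos' : 0 < volume (U0 ∩ {y | Q y ≠ 0}) :=
      hUopen.measure_pos volume ⟨x, hx, hqx⟩
    have hsub : (U0 ∩ {y | Q y ≠ 0}) ⊆ {y | y ∈ Box ∧ Q y ≠ 0} :=
      fun y hy => ⟨hU0sub hy.1, hy.2⟩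
    exact absurd (measure_mono_null hsub hnull) hpos'.ne'
  -- gradSq vanishes on the open box, hence on its closure, hence everywhere by periodicity
  have hgs0open : ∀ x ∈ U0, gradSq l x = 0 := by
    intro x hx
    have := hQ0open x hx
    have hrp : (0:ℝ) < l x ^ (e - 2) := Real.rpow_pos_of_pos (hpos x) _
    rw [hQ] at this
    exact by
      have := mul_eq_zero.mp this
      rcases this with h | h
      · exact absurd h hrp.ne'
      · exact h
  have hgsBox : ∀ x ∈ Box, gradSq l x = 0 := by
    have hclos : closure U0 = Box := by
      rw [hU0, hBox, closure_pi_set]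
      simp only [Function.comp, closure_Ioo (zero_ne_one)]
      exact Set.pi_univ_Icc _ _
    intro x hx
    have : Set.EqOn (gradSq l) 0 (closure U0) :=
      (Set.EqOn.closure (fun y hy => hgs0open y hy) hgsc continuous_const)
    have := this (hclos ▸ hx)
    simpa using this
  have hgsper : Zperiodic (gradSq l) := by
    intro x m
    unfold gradSq
    exact Finset.sum_congr rfl fun i _ => by rw [pd_zperiodic i hld hper x m]
  have hgszero : ∀ x, gradSq l x = 0 := by
    intro x
    set mm : Fin (N+1) → ℤ := fun i => ⌊x i⌋ with hmm
    set y : Fin (N+1) → ℝ := fun i => Int.fract (x i) with hy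
    have hxy : x = y + fun i => ((mm i : ℤ) : ℝ) := by
      funext i
      show x i = Int.fract (x i) + ((⌊x i⌋ : ℤ) : ℝ)
      rw [Int.fract_add_floor]
    have hyBox : y ∈ Box := by
      rw [hBox]
      constructor
      · intro i; exact Int.fract_nonneg _
      · intro i; exact (Int.fract_lt_one _).le
    rw [hxy, hgsper y mm]
    exact hgsBox y hyBox
  -- conclude fderiv is zero everywhere
  have hpdzero : ∀ (i : Fin (N+1)) x, pd i l x = 0 := by
    intro i x
    have h := hgszero x
    unfold gradSq at h
    have := (Finset.sum_eq_zero_iff_of_nonneg (fun j _ => sq_nonneg (pd j l x))).mp h i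
      (Finset.mem_univ i)
    exact pow_eq_zero_iff (two_ne_zero) |>.mp this
  have hfz : ∀ x, fderiv ℝ l x = 0 := by
    intro x
    ext v
    have hv : v = ∑ i : Fin (N+1), v i • (Pi.single i (1:ℝ) : Fin (N+1) → ℝ) := by
      funext j
      simp [Pi.single_apply, Finset.sum_apply]
    rw [ContinuousLinearMap.zero_apply, hv, map_sum]
    refine Finset.sum_eq_zero fun i _ => ?_
    rw [_root_.map_smul]
    have : fderiv ℝ l x (Pi.single i 1) = pd i l x := rfl
    rw [this, hpdzero i x, smul_zero]
  exact fun x y => is_const_of_fderiv_eq_zero hld hfz x y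
end
end

section
/- Let A : ℝ → Matₙ(ℝ) be a C¹ curve of matrices satisfying the Riccati equation Ȧ + (A + Γ) B A + (A + Γ) C + Cᵀ A + D = 0, where B(t) is symmetric positive definite and Γ is a constant skew-symmetric matrix. Then d/dt tr A(t) + tr( D − Cᵀ B^{−1} C ) ≤ 0, with equality at a time t if and only if A(t) = −B(t)^{−1} C(t). -/
open MeasureTheory Real Filter Matrix

noncomputable section

lemma trace_conj_aux {n : ℕ} {N : Matrix (Fin n) (Fin n) ℝ} (hN : N.PosDef)
    (Y : Matrix (Fin n) (Fin n) ℝ) :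
    0 ≤ (Yᵀ * N * Y).trace ∧ ((Yᵀ * N * Y).trace = 0 ↔ Y = 0) := by
  have hdiag : ∀ j, (Yᵀ * N * Y) j j
      = dotProduct (star (fun i => Y i j)) (N *ᵥ fun i => Y i j) := by
    intro j
    simp only [Matrix.mul_apply, Matrix.transpose_apply, dotProduct, Matrix.mulVec,
      star_trivial, Finset.mul_sum, Finset.sum_mul]
    rw [Finset.sum_comm]
    congr 1; ext k; congr 1; ext i; ring
  have hnonneg : ∀ j, 0 ≤ (Yᵀ * N * Y) j j := by
    intro j
    rw [hdiag j]
    exact hN.posSemidef.dotProduct_mulVec_nonneg _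
  constructor
  · exact Finset.sum_nonneg fun j _ => hnonneg j
  · constructor
    · intro h
      have hz : ∀ j ∈ Finset.univ, (Yᵀ * N * Y) j j = 0 :=
        (Finset.sum_eq_zero_iff_of_nonneg fun j _ => hnonneg j).mp h
      ext i j
      have hcol : (fun i => Y i j) = 0 := by
        by_contra hv
        have := hN.dotProduct_mulVec_pos hv
        rw [← hdiag j, hz j (Finset.mem_univ j)] at this
        exact lt_irrefl _ this
      simpa using congrFun hcol i
    · rintro rfl
      simp

/-- Riccati inequality. If Ȧ + (A+Γ)BA + (A+Γ)C + CᵀA + D = 0 with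
B symmetric positive definite, Γ constant skew-symmetric and Aᵀ − A = Γ, then
(d/dt) tr A + tr(D − CᵀB⁻¹C) ≤ 0, with equality iff A = −B⁻¹C. -/
theorem stmt_10 {n : ℕ} (A A' B C D : ℝ → Matrix (Fin n) (Fin n) ℝ)
    (hA : ∀ t i j, HasDerivAt (fun s => A s i j) (A' t i j) t)
    (hB : ∀ t, (B t).PosDef)
    (hBc : ∀ i j, Continuous fun t => B t i j)
    (hCc : ∀ i j, Continuous fun t => C t i j)
    (hDc : ∀ i j, Continuous fun t => D t i j)
    (Γ : Matrix (Fin n) (Fin n) ℝ) (hΓ : Γᵀ = -Γ)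
    (hLag : ∀ t, (A t)ᵀ - A t = Γ)
    (hric : ∀ t,
      A' t + (A t + Γ) * B t * A t + (A t + Γ) * C t + (C t)ᵀ * A t + D t = 0) :
    ∀ t,
      Matrix.trace (A' t) + Matrix.trace (D t - (C t)ᵀ * (B t)⁻¹ * C t) ≤ 0 ∧
      (Matrix.trace (A' t) + Matrix.trace (D t - (C t)ᵀ * (B t)⁻¹ * C t) = 0 ↔
        A t = -((B t)⁻¹ * C t)) := by
  intro t
  have hBH := (hB t).1
  have hBsym : (B t)ᵀ = B t := by
    ext i j
    simpa using congrFun (congrFun hBH i) j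
  have hdet : IsUnit (B t).det := (hB t).det_pos.ne'.isUnit
  have h1 : B t * (B t)⁻¹ = 1 := Matrix.mul_nonsing_inv _ hdet
  have h2 : (B t)⁻¹ * B t = 1 := Matrix.nonsing_inv_mul _ hdet
  have hAT : (A t)ᵀ = A t + Γ := by
    have := hLag t
    linear_combination (norm := module) this
  set Y : Matrix (Fin n) (Fin n) ℝ := B t * A t + C t with hY
  have hYT : Yᵀ = (A t + Γ) * B t + (C t)ᵀ := by
    rw [hY, Matrix.transpose_add, Matrix.transpose_mul, hAT, hBsym]
  have hident : Yᵀ * (B t)⁻¹ * Y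
      = (A t + Γ) * B t * A t + (A t + Γ) * C t + (C t)ᵀ * A t
        + (C t)ᵀ * (B t)⁻¹ * C t := by
    rw [hYT]
    calc ((A t + Γ) * B t + (C t)ᵀ) * (B t)⁻¹ * (B t * A t + C t)
        = (A t + Γ) * (B t * (B t)⁻¹) * (B t * A t) + (A t + Γ) * (B t * (B t)⁻¹) * C t
          + (C t)ᵀ * ((B t)⁻¹ * B t) * A t + (C t)ᵀ * (B t)⁻¹ * C t := by
          noncomm_ring
      _ = _ := by rw [h1, h2]; noncomm_ring
  have hA' : A' t = -((A t + Γ) * B t * A t + (A t + Γ) * C t + (C t)ᵀ * A t + D t) := by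
    have := hric t
    linear_combination (norm := module) this
  have hkey := trace_conj_aux (hB t).inv Y
  have htr : Matrix.trace (A' t) + Matrix.trace (D t - (C t)ᵀ * (B t)⁻¹ * C t)
      = -(Yᵀ * (B t)⁻¹ * Y).trace := by
    rw [hident, hA']
    simp only [Matrix.trace_neg, Matrix.trace_add, Matrix.trace_sub]
    ring
  have hYiff : Y = 0 ↔ A t = -((B t)⁻¹ * C t) := by
    constructor
    · intro h
      have : (B t)⁻¹ * (B t * A t + C t) = (B t)⁻¹ * 0 := by rw [← hY, h]
      rw [Matrix.mul_add, ← Matrix.mul_assoc, h2, Matrix.one_mul, Matrix.mul_zero] at this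
      linear_combination (norm := module) this
    · intro h
      rw [hY, h]
      rw [Matrix.mul_neg, ← Matrix.mul_assoc, h1, Matrix.one_mul]
      module
  constructor
  · rw [htr]; linarith [hkey.1]
  · rw [htr, neg_eq_zero, hkey.2]
    exact hYiff
end
end

section
/- Let H : ℝⁿ × 𝕋ⁿ → ℝ be smooth, even in p (H(p,q)=H(−p,q)), with H_{pp} invertible along {H = 1/2}, let α be a smooth 1-form on 𝕋ⁿ, and H̃(p,q) = H(p−α(q),q). Let μ and μ̃ be the Liouville measures on {H = 1/2} and {H̃ = 1/2} respectively. Then ∫ tr( H̃_{qq} − H̃_{qp}H̃_{pp}^{−1}H̃_{pq} ) dμ̃ = ∫ tr( H_{qq} − H_{qp}H_{pp}^{−1}H_{pq} ) dμ. -/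
open MeasureTheory Real Filter Matrix

noncomputable section

namespace S16

variable {n : ℕ}

abbrev EE (n : ℕ) := (Fin n → ℝ) × (Fin n → ℝ)

def DP (i : Fin n) (G : EE n → ℝ) (x : EE n) : ℝ := fderiv ℝ G x (Pi.single i 1, 0)
def DQ (j : Fin n) (G : EE n → ℝ) (x : EE n) : ℝ := fderiv ℝ G x (0, Pi.single j 1)

lemma contDiff_DP {G : EE n → ℝ} (hG : ContDiff ℝ (⊤ : ℕ∞) G) (i : Fin n) : ContDiff ℝ (⊤ : ℕ∞) (DP i G) :=
  (ContinuousLinearMap.apply ℝ ℝ ((Pi.single i 1, 0) : EE n)).contDiff.comp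
    (hG.fderiv_right (by simp))

lemma contDiff_DQ {G : EE n → ℝ} (hG : ContDiff ℝ (⊤ : ℕ∞) G) (j : Fin n) : ContDiff ℝ (⊤ : ℕ∞) (DQ j G) :=
  (ContinuousLinearMap.apply ℝ ℝ ((0, Pi.single j 1) : EE n)).contDiff.comp
    (hG.fderiv_right (by simp))

lemma contDiff_pd {f : (Fin n → ℝ) → ℝ} (hf : ContDiff ℝ (⊤ : ℕ∞) f) (i : Fin n) :
    ContDiff ℝ (⊤ : ℕ∞) (pd i f) :=
  (ContinuousLinearMap.apply ℝ ℝ (Pi.single i 1 : Fin n → ℝ)).contDiff.comp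
    (hf.fderiv_right (by simp))

lemma pdP_slice {G : EE n → ℝ} (hG : ContDiff ℝ (⊤ : ℕ∞) G) (i : Fin n) (p q : Fin n → ℝ) :
    pdP i (fun a b => G (a, b)) p q = DP i G (p, q) := by
  have h2 : HasFDerivAt (fun a : Fin n → ℝ => G (a, q))
      ((fderiv ℝ G (p, q)).comp (ContinuousLinearMap.inl ℝ _ _)) p :=
    ((hG.differentiable (by simp) (p, q)).hasFDerivAt).comp p (hasFDerivAt_prodMk_left p q)
  show fderiv ℝ (fun a => G (a, q)) p (Pi.single i 1) = _
  rw [h2.fderiv]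
  rfl

lemma pdQ_slice {G : EE n → ℝ} (hG : ContDiff ℝ (⊤ : ℕ∞) G) (j : Fin n) (p q : Fin n → ℝ) :
    pdQ j (fun a b => G (a, b)) p q = DQ j G (p, q) := by
  have h2 : HasFDerivAt (fun b : Fin n → ℝ => G (p, b))
      ((fderiv ℝ G (p, q)).comp (ContinuousLinearMap.inr ℝ _ _)) q :=
    ((hG.differentiable (by simp) (p, q)).hasFDerivAt).comp q (hasFDerivAt_prodMk_right p q)
  show fderiv ℝ (fun b => G (p, b)) q (Pi.single j 1) = _
  rw [h2.fderiv]
  rfl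

lemma vecP_decomp (v : Fin n → ℝ) :
    ((v, 0) : EE n) = ∑ k, v k • ((Pi.single k 1, 0) : EE n) := by
  have h1 : ∀ k : Fin n, v k • ((Pi.single k 1, 0) : EE n)
      = ((Pi.single k (v k) : Fin n → ℝ), (0 : Fin n → ℝ)) := by
    intro k
    rw [Prod.smul_mk, smul_zero]
    congr 1
    rw [← Pi.single_smul]
    simp
  rw [Finset.sum_congr rfl fun k _ => h1 k]
  have h2 : (∑ k, ((Pi.single k (v k) : Fin n → ℝ), (0 : Fin n → ℝ))) =
      ((∑ k, (Pi.single k (v k) : Fin n → ℝ)), (0 : Fin n → ℝ)) := by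
    apply Prod.ext <;> simp [Prod.fst_sum, Prod.snd_sum]
  rw [h2, Finset.univ_sum_single]

def shf (α : (Fin n → ℝ) → (Fin n → ℝ)) (x : EE n) : EE n := (x.1 - α x.2, x.2)

lemma contDiff_shf {α : (Fin n → ℝ) → (Fin n → ℝ)} (hα : ContDiff ℝ (⊤ : ℕ∞) α) :
    ContDiff ℝ (⊤ : ℕ∞) (shf (n := n) α) :=
  (contDiff_fst.sub (hα.comp contDiff_snd)).prodMk contDiff_snd

def Sm (α : (Fin n → ℝ) → (Fin n → ℝ)) (x : EE n) : EE n →L[ℝ] EE n :=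
  ((ContinuousLinearMap.fst ℝ _ _) - (fderiv ℝ α x.2).comp (ContinuousLinearMap.snd ℝ _ _)).prod
    (ContinuousLinearMap.snd ℝ _ _)

lemma hasFDerivAt_shf {α : (Fin n → ℝ) → (Fin n → ℝ)} (hα : ContDiff ℝ (⊤ : ℕ∞) α) (x : EE n) :
    HasFDerivAt (shf α) (Sm α x) x := by
  have h1 : HasFDerivAt (fun y : EE n => α y.2)
      ((fderiv ℝ α x.2).comp (ContinuousLinearMap.snd ℝ _ _)) x :=
    ((hα.differentiable (by simp) x.2).hasFDerivAt).comp x hasFDerivAt_snd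
  exact (hasFDerivAt_fst.sub h1).prodMk hasFDerivAt_snd

lemma fderiv_comp_shf {α : (Fin n → ℝ) → (Fin n → ℝ)} (hα : ContDiff ℝ (⊤ : ℕ∞) α)
    {G : EE n → ℝ} (hG : ContDiff ℝ (⊤ : ℕ∞) G) (x : EE n) :
    fderiv ℝ (fun y => G (shf α y)) x = (fderiv ℝ G (shf α x)).comp (Sm α x) :=
  (((hG.differentiable (by simp) (shf α x)).hasFDerivAt).comp x (hasFDerivAt_shf hα x)).fderiv

lemma DP_comp_shf {α : (Fin n → ℝ) → (Fin n → ℝ)} (hα : ContDiff ℝ (⊤ : ℕ∞) α)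
    {G : EE n → ℝ} (hG : ContDiff ℝ (⊤ : ℕ∞) G) (i : Fin n) (x : EE n) :
    DP i (fun y => G (shf α y)) x = DP i G (shf α x) := by
  rw [DP, fderiv_comp_shf hα hG x, ContinuousLinearMap.comp_apply]
  have h : Sm α x (Pi.single i 1, 0) = ((Pi.single i 1 : Fin n → ℝ), 0) := by
    simp [Sm]
  rw [h]
  rfl

def da (α : (Fin n → ℝ) → (Fin n → ℝ)) (j k : Fin n) (q : Fin n → ℝ) : ℝ :=
  fderiv ℝ α q (Pi.single j 1) k

lemma da_eq_pd {α : (Fin n → ℝ) → (Fin n → ℝ)} (hα : ContDiff ℝ (⊤ : ℕ∞) α) (j k : Fin n)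
    (q : Fin n → ℝ) : da α j k q = pd j (fun y => α y k) q := by
  have h : HasFDerivAt (fun y => α y k)
      ((ContinuousLinearMap.proj k : (Fin n → ℝ) →L[ℝ] ℝ).comp (fderiv ℝ α q)) q :=
    ((ContinuousLinearMap.proj k : (Fin n → ℝ) →L[ℝ] ℝ).hasFDerivAt).comp q
      (hα.differentiable (by simp) q).hasFDerivAt
  rw [pd, h.fderiv]
  rfl

lemma contDiff_da {α : (Fin n → ℝ) → (Fin n → ℝ)} (hα : ContDiff ℝ (⊤ : ℕ∞) α) (j k : Fin n) :
    ContDiff ℝ (⊤ : ℕ∞) (da α j k) :=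
  ((ContinuousLinearMap.proj k : (Fin n → ℝ) →L[ℝ] ℝ)).contDiff.comp
    ((ContinuousLinearMap.apply ℝ (Fin n → ℝ) (Pi.single j 1 : Fin n → ℝ)).contDiff.comp
      (hα.fderiv_right (by simp)))

lemma DQ_comp_shf {α : (Fin n → ℝ) → (Fin n → ℝ)} (hα : ContDiff ℝ (⊤ : ℕ∞) α)
    {G : EE n → ℝ} (hG : ContDiff ℝ (⊤ : ℕ∞) G) (j : Fin n) (x : EE n) :
    DQ j (fun y => G (shf α y)) x
      = DQ j G (shf α x) - ∑ k, da α j k x.2 * DP k G (shf α x) := by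
  rw [DQ, fderiv_comp_shf hα hG x, ContinuousLinearMap.comp_apply]
  have h1 : Sm α x ((0 : Fin n → ℝ), Pi.single j 1)
      = (((0 : Fin n → ℝ), Pi.single j 1) : EE n)
        - ((fderiv ℝ α x.2 (Pi.single j 1), 0) : EE n) := by
    apply Prod.ext <;> simp [Sm]
  rw [h1, map_sub]
  congr 1
  rw [vecP_decomp (fderiv ℝ α x.2 (Pi.single j 1)), map_sum]
  refine Finset.sum_congr rfl fun k _ => ?_
  rw [_root_.map_smul]
  rfl

lemma hasFDerivAt_sub_sum_mul {f : EE n → ℝ} (hf : ContDiff ℝ (⊤ : ℕ∞) f)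
    {b : Fin n → (Fin n → ℝ) → ℝ} (hb : ∀ k, ContDiff ℝ (⊤ : ℕ∞) (b k))
    {g : Fin n → EE n → ℝ} (hg : ∀ k, ContDiff ℝ (⊤ : ℕ∞) (g k)) (x : EE n) :
    HasFDerivAt (fun y => f y - ∑ k, b k y.2 * g k y)
      (fderiv ℝ f x - ∑ k, (b k x.2 • fderiv ℝ (g k) x
        + g k x • ((fderiv ℝ (b k) x.2).comp (ContinuousLinearMap.snd ℝ _ _)))) x := by
  have hterm : ∀ k : Fin n, HasFDerivAt (fun y : EE n => b k y.2 * g k y)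
      (b k x.2 • fderiv ℝ (g k) x
        + g k x • ((fderiv ℝ (b k) x.2).comp (ContinuousLinearMap.snd ℝ _ _))) x := by
    intro k
    have hb' : HasFDerivAt (fun y : EE n => b k y.2)
        ((fderiv ℝ (b k) x.2).comp (ContinuousLinearMap.snd ℝ _ _)) x :=
      (((hb k).differentiable (by simp) x.2).hasFDerivAt).comp x hasFDerivAt_snd
    exact hb'.mul ((hg k).differentiable (by simp) x).hasFDerivAt
  exact ((hf.differentiable (by simp) x).hasFDerivAt).sub (HasFDerivAt.fun_sum fun k _ => hterm k)

lemma DP_sub_sum_mul {f : EE n → ℝ} (hf : ContDiff ℝ (⊤ : ℕ∞) f)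
    {b : Fin n → (Fin n → ℝ) → ℝ} (hb : ∀ k, ContDiff ℝ (⊤ : ℕ∞) (b k))
    {g : Fin n → EE n → ℝ} (hg : ∀ k, ContDiff ℝ (⊤ : ℕ∞) (g k)) (i : Fin n) (x : EE n) :
    DP i (fun y => f y - ∑ k, b k y.2 * g k y) x
      = DP i f x - ∑ k, b k x.2 * DP i (g k) x := by
  rw [DP, (hasFDerivAt_sub_sum_mul hf hb hg x).fderiv]
  simp [DP, ContinuousLinearMap.sum_apply, smul_eq_mul]

lemma DQ_sub_sum_mul {f : EE n → ℝ} (hf : ContDiff ℝ (⊤ : ℕ∞) f)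
    {b : Fin n → (Fin n → ℝ) → ℝ} (hb : ∀ k, ContDiff ℝ (⊤ : ℕ∞) (b k))
    {g : Fin n → EE n → ℝ} (hg : ∀ k, ContDiff ℝ (⊤ : ℕ∞) (g k)) (i : Fin n) (x : EE n) :
    DQ i (fun y => f y - ∑ k, b k y.2 * g k y) x
      = DQ i f x - ∑ k, (b k x.2 * DQ i (g k) x + g k x * pd i (b k) x.2) := by
  rw [DQ, (hasFDerivAt_sub_sum_mul hf hb hg x).fderiv]
  simp [DQ, pd, ContinuousLinearMap.sum_apply, smul_eq_mul]


variable {n : ℕ}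

def Am (F : EE n → ℝ) (x : EE n) : Matrix (Fin n) (Fin n) ℝ := Matrix.of fun i j => DP i (DP j F) x
def Bm (F : EE n → ℝ) (x : EE n) : Matrix (Fin n) (Fin n) ℝ := Matrix.of fun i j => DQ i (DP j F) x
def Cm (F : EE n → ℝ) (x : EE n) : Matrix (Fin n) (Fin n) ℝ := Matrix.of fun i j => DP i (DQ j F) x
def Qm (F : EE n → ℝ) (x : EE n) : Matrix (Fin n) (Fin n) ℝ := Matrix.of fun i j => DQ i (DQ j F) x
def Mm (F : EE n → ℝ) (α : (Fin n → ℝ) → (Fin n → ℝ)) (x : EE n) : Matrix (Fin n) (Fin n) ℝ :=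
  Matrix.of fun i j => ∑ k, DP k F x * pd i (pd j (fun y => α y k)) x.2

lemma Hpp_eq {F : EE n → ℝ} (hF : ContDiff ℝ (⊤ : ℕ∞) F) (p q : Fin n → ℝ) :
    Hpp (fun a b => F (a, b)) p q = Am F (p, q) := by
  ext i j
  show pdP i (pdP j fun a b => F (a, b)) p q = DP i (DP j F) (p, q)
  rw [show pdP j (fun a b => F (a, b)) = fun a b => DP j F (a, b) from
    funext fun a => funext fun b => pdP_slice hF j a b]
  exact pdP_slice (contDiff_DP hF j) i p q

lemma Hpq_eq {F : EE n → ℝ} (hF : ContDiff ℝ (⊤ : ℕ∞) F) (p q : Fin n → ℝ) :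
    Hpq (fun a b => F (a, b)) p q = Cm F (p, q) := by
  ext i j
  show pdP i (pdQ j fun a b => F (a, b)) p q = DP i (DQ j F) (p, q)
  rw [show pdQ j (fun a b => F (a, b)) = fun a b => DQ j F (a, b) from
    funext fun a => funext fun b => pdQ_slice hF j a b]
  exact pdP_slice (contDiff_DQ hF j) i p q

lemma Hqp_eq {F : EE n → ℝ} (hF : ContDiff ℝ (⊤ : ℕ∞) F) (p q : Fin n → ℝ) :
    Hqp (fun a b => F (a, b)) p q = Bm F (p, q) := by
  ext i j
  show pdQ i (pdP j fun a b => F (a, b)) p q = DQ i (DP j F) (p, q)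
  rw [show pdP j (fun a b => F (a, b)) = fun a b => DP j F (a, b) from
    funext fun a => funext fun b => pdP_slice hF j a b]
  exact pdQ_slice (contDiff_DP hF j) i p q

lemma Hqq_eq {F : EE n → ℝ} (hF : ContDiff ℝ (⊤ : ℕ∞) F) (p q : Fin n → ℝ) :
    Hqq (fun a b => F (a, b)) p q = Qm F (p, q) := by
  ext i j
  show pdQ i (pdQ j fun a b => F (a, b)) p q = DQ i (DQ j F) (p, q)
  rw [show pdQ j (fun a b => F (a, b)) = fun a b => DQ j F (a, b) from
    funext fun a => funext fun b => pdQ_slice hF j a b]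
  exact pdQ_slice (contDiff_DQ hF j) i p q

variable {F : EE n → ℝ} {α : (Fin n → ℝ) → (Fin n → ℝ)}

lemma Am_shf (hF : ContDiff ℝ (⊤ : ℕ∞) F) (hα : ContDiff ℝ (⊤ : ℕ∞) α) (y : EE n) :
    Am (fun z => F (shf α z)) y = Am F (shf α y) := by
  ext i j
  show DP i (DP j fun z => F (shf α z)) y = DP i (DP j F) (shf α y)
  rw [show DP j (fun z => F (shf α z)) = fun z => DP j F (shf α z) from
    funext fun z => DP_comp_shf hα hF j z]
  exact DP_comp_shf hα (contDiff_DP hF j) i y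

lemma Cm_shf (hF : ContDiff ℝ (⊤ : ℕ∞) F) (hα : ContDiff ℝ (⊤ : ℕ∞) α) (y : EE n) :
    Cm (fun z => F (shf α z)) y = Cm F (shf α y) - Am F (shf α y) * Dmat α y.2 := by
  ext i j
  show DP i (DQ j fun z => F (shf α z)) y = _
  rw [show DQ j (fun z => F (shf α z))
      = fun z => DQ j F (shf α z) - ∑ k, da α j k z.2 * DP k F (shf α z) from
    funext fun z => DQ_comp_shf hα hF j z]
  have hf' : ContDiff ℝ (⊤ : ℕ∞) fun z : EE n => DQ j F (shf α z) :=
    (contDiff_DQ hF j).comp (contDiff_shf hα)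
  have hg' : ∀ k : Fin n, ContDiff ℝ (⊤ : ℕ∞) fun z : EE n => DP k F (shf α z) :=
    fun k => (contDiff_DP hF k).comp (contDiff_shf hα)
  rw [DP_sub_sum_mul hf' (fun k => contDiff_da hα j k) hg' i y]
  rw [DP_comp_shf hα (contDiff_DQ hF j) i y]
  simp only [Matrix.sub_apply, Matrix.mul_apply, Cm, Am, Dmat, Matrix.of_apply]
  congr 1
  refine Finset.sum_congr rfl fun k _ => ?_
  rw [DP_comp_shf hα (contDiff_DP hF k) i y, da_eq_pd hα, mul_comm]

lemma Bm_shf (hF : ContDiff ℝ (⊤ : ℕ∞) F) (hα : ContDiff ℝ (⊤ : ℕ∞) α) (y : EE n) :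
    Bm (fun z => F (shf α z)) y = Bm F (shf α y) - (Dmat α y.2)ᵀ * Am F (shf α y) := by
  ext i j
  show DQ i (DP j fun z => F (shf α z)) y = _
  rw [show DP j (fun z => F (shf α z)) = fun z => DP j F (shf α z) from
    funext fun z => DP_comp_shf hα hF j z]
  rw [DQ_comp_shf hα (contDiff_DP hF j) i y]
  simp only [Matrix.sub_apply, Matrix.mul_apply, Bm, Am, Dmat, Matrix.transpose_apply,
    Matrix.of_apply]
  congr 1
  exact Finset.sum_congr rfl fun k _ => by rw [da_eq_pd hα]

lemma Qm_shf (hF : ContDiff ℝ (⊤ : ℕ∞) F) (hα : ContDiff ℝ (⊤ : ℕ∞) α) (y : EE n) :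
    Qm (fun z => F (shf α z)) y
      = Qm F (shf α y) - (Dmat α y.2)ᵀ * Cm F (shf α y) - Bm F (shf α y) * Dmat α y.2
        + (Dmat α y.2)ᵀ * (Am F (shf α y) * Dmat α y.2) - Mm F α (shf α y) := by
  ext i j
  show DQ i (DQ j fun z => F (shf α z)) y = _
  rw [show DQ j (fun z => F (shf α z))
      = fun z => DQ j F (shf α z) - ∑ k, da α j k z.2 * DP k F (shf α z) from
    funext fun z => DQ_comp_shf hα hF j z]
  have hf' : ContDiff ℝ (⊤ : ℕ∞) fun z : EE n => DQ j F (shf α z) :=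
    (contDiff_DQ hF j).comp (contDiff_shf hα)
  have hg' : ∀ k : Fin n, ContDiff ℝ (⊤ : ℕ∞) fun z : EE n => DP k F (shf α z) :=
    fun k => (contDiff_DP hF k).comp (contDiff_shf hα)
  rw [DQ_sub_sum_mul hf' (fun k => contDiff_da hα j k) hg' i y]
  rw [DQ_comp_shf hα (contDiff_DQ hF j) i y]
  have hgk : ∀ k : Fin n, DQ i (fun z => DP k F (shf α z)) y
      = DQ i (DP k F) (shf α y) - ∑ l, da α i l y.2 * DP l (DP k F) (shf α y) :=
    fun k => DQ_comp_shf hα (contDiff_DP hF k) i y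
  have hpdda : ∀ k : Fin n, pd i (da α j k) y.2 = pd i (pd j fun y' => α y' k) y.2 := by
    intro k
    congr 1
    exact funext fun q => da_eq_pd hα j k q
  simp only [hgk, hpdda, da_eq_pd hα]
  simp only [Matrix.sub_apply, Matrix.add_apply, Matrix.mul_apply, Qm, Cm, Bm, Am, Mm, Dmat,
    Matrix.transpose_apply, Matrix.of_apply]
  have hz2 : (shf α y).2 = y.2 := rfl
  rw [hz2]
  simp only [mul_sub, Finset.sum_add_distrib, Finset.sum_sub_distrib]
  have comm1 : ∑ k, DQ i (DP k F) (shf α y) * pd j (fun x => α x k) y.2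
      = ∑ k, pd j (fun x => α x k) y.2 * DQ i (DP k F) (shf α y) :=
    Finset.sum_congr rfl fun k _ => mul_comm _ _
  rw [comm1]
  have swap : ∑ k, pd j (fun x => α x k) y.2
        * ∑ l, pd i (fun x => α x l) y.2 * DP l (DP k F) (shf α y)
      = ∑ l, pd i (fun x => α x l) y.2
        * ∑ k, DP l (DP k F) (shf α y) * pd j (fun x => α x k) y.2 := by
    simp_rw [Finset.mul_sum]
    rw [Finset.sum_comm]
    exact Finset.sum_congr rfl fun l _ => Finset.sum_congr rfl fun k _ => by ring
  rw [swap]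
  ring

lemma trace_key (A B C Q D M : Matrix (Fin n) (Fin n) ℝ) (hA : IsUnit A) :
    (Q - Dᵀ * C - B * D + Dᵀ * (A * D) - M
      - (B - Dᵀ * A) * A⁻¹ * (C - A * D)).trace
      = (Q - B * A⁻¹ * C).trace - M.trace := by
  have hd : IsUnit A.det := (Matrix.isUnit_iff_isUnit_det A).mp hA
  have h1 : A * A⁻¹ = 1 := Matrix.mul_nonsing_inv A hd
  have h2 : A⁻¹ * A = 1 := Matrix.nonsing_inv_mul A hd
  have h3 : (B - Dᵀ * A) * A⁻¹ * (C - A * D)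
      = B * A⁻¹ * C - B * D - Dᵀ * C + Dᵀ * (A * D) := by
    have e1 : B * A⁻¹ * (A * D) = B * D := by
      rw [Matrix.mul_assoc B A⁻¹ (A * D), ← Matrix.mul_assoc A⁻¹ A D, h2, Matrix.one_mul]
    have e2 : Dᵀ * A * A⁻¹ * C = Dᵀ * C := by
      rw [Matrix.mul_assoc Dᵀ A A⁻¹, h1, Matrix.mul_one]
    have e3 : Dᵀ * A * A⁻¹ * (A * D) = Dᵀ * (A * D) := by
      rw [Matrix.mul_assoc Dᵀ A A⁻¹, h1, Matrix.mul_one]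
    simp only [Matrix.sub_mul, Matrix.mul_sub]
    rw [e1, e2, e3]
    abel
  rw [h3]
  have h4 : Q - Dᵀ * C - B * D + Dᵀ * (A * D) - M
      - (B * A⁻¹ * C - B * D - Dᵀ * C + Dᵀ * (A * D)) = Q - B * A⁻¹ * C - M := by abel
  rw [h4, Matrix.trace_sub]

lemma pdP_odd {H : (Fin n → ℝ) → (Fin n → ℝ) → ℝ}
    (hH : ContDiff ℝ (⊤ : ℕ∞) fun x : EE n => H x.1 x.2)
    (heven : ∀ p q, H (-p) q = H p q) (k : Fin n) (p q : Fin n → ℝ) :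
    pdP k H (-p) q = - pdP k H p q := by
  have hd : ∀ p' : Fin n → ℝ, HasFDerivAt (fun p'' => H p'' q)
      ((fderiv ℝ (fun x : EE n => H x.1 x.2) (p', q)).comp (ContinuousLinearMap.inl ℝ _ _)) p' :=
    fun p' => by
      have h := ((hH.differentiable (by simp) (p', q)).hasFDerivAt).comp p'
        (hasFDerivAt_prodMk_left (𝕜 := ℝ) p' q)
      exact h
  have hneg : HasFDerivAt (fun p'' : Fin n → ℝ => -p'')
      (-(ContinuousLinearMap.id ℝ (Fin n → ℝ))) p := (hasFDerivAt_id p).neg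
  have hcomp : HasFDerivAt (fun p'' => H (-p'') q)
      (((fderiv ℝ (fun x : EE n => H x.1 x.2) (-p, q)).comp (ContinuousLinearMap.inl ℝ _ _)).comp
        (-(ContinuousLinearMap.id ℝ (Fin n → ℝ)))) p := (hd (-p)).comp p hneg
  have heq : (fun p'' => H (-p'') q) = fun p'' => H p'' q := funext fun p'' => heven p'' q
  rw [heq] at hcomp
  have hfd := hcomp.fderiv
  have hfd2 := (hd (-p)).fderiv
  show fderiv ℝ (fun p' => H p' q) (-p) (Pi.single k 1) = - fderiv ℝ (fun p' => H p' q) p (Pi.single k 1)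
  rw [hfd, hfd2]
  simp

lemma measurable_det {X : Type*} [MeasurableSpace X] {M : X → Matrix (Fin n) (Fin n) ℝ}
    (h : ∀ i j, Measurable fun x => M x i j) : Measurable fun x => (M x).det := by
  simp_rw [Matrix.det_apply']
  exact Finset.measurable_sum _ fun σ _ =>
    measurable_const.mul (Finset.measurable_prod _ fun i _ => h _ _)

lemma measurable_inv_entry {X : Type*} [MeasurableSpace X] {M : X → Matrix (Fin n) (Fin n) ℝ}
    (h : ∀ i j, Measurable fun x => M x i j) (i j : Fin n) :
    Measurable fun x => (M x)⁻¹ i j := by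
  simp_rw [Matrix.inv_def, Matrix.smul_apply, Ring.inverse_eq_inv', smul_eq_mul]
  refine Measurable.mul ((measurable_det h).inv) ?_
  simp_rw [Matrix.adjugate_apply]
  apply measurable_det
  intro a b
  simp_rw [Matrix.updateRow_apply]
  split_ifs
  · exact measurable_const
  · exact h a b

lemma measurable_trace_expr {X : Type*} [MeasurableSpace X]
    {P B C Q : X → Matrix (Fin n) (Fin n) ℝ}
    (hP : ∀ i j, Measurable fun x => P x i j) (hB : ∀ i j, Measurable fun x => B x i j)
    (hC : ∀ i j, Measurable fun x => C x i j) (hQ : ∀ i j, Measurable fun x => Q x i j) :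
    Measurable fun x => (Q x - B x * (P x)⁻¹ * C x).trace := by
  have hinv := measurable_inv_entry hP
  simp_rw [Matrix.trace, Matrix.diag_apply, Matrix.sub_apply, Matrix.mul_apply]
  refine Finset.measurable_sum _ fun i _ => (hQ i i).sub ?_
  refine Finset.measurable_sum _ fun l _ => Measurable.mul ?_ (hC l i)
  exact Finset.measurable_sum _ fun k _ => (hB i k).mul (hinv k l)

lemma integral_odd_zero {μ : Measure (EE n)}
    (hsym : Measure.map (fun x : EE n => (-x.1, x.2)) μ = μ)
    {g : EE n → ℝ} (hg : Measurable g) (hodd : ∀ x : EE n, g (-x.1, x.2) = - g x) :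
    ∫ x, g x ∂μ = 0 := by
  have hm : Measurable fun x : EE n => ((-x.1, x.2) : EE n) :=
    (measurable_fst.neg).prodMk measurable_snd
  have h1 : ∫ x, g x ∂μ = ∫ x, g (-x.1, x.2) ∂μ := by
    conv_lhs => rw [← hsym]
    rw [integral_map hm.aemeasurable hg.aestronglyMeasurable]
  have h2 : ∫ x, g (-x.1, x.2) ∂μ = - ∫ x, g x ∂μ := by
    simp_rw [hodd]
    exact integral_neg g
  have := h1.trans h2
  linarith

lemma Hpp_entry {F : EE n → ℝ} (hF : ContDiff ℝ (⊤ : ℕ∞) F) (x : EE n) (i j : Fin n) :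
    Hpp (fun a b => F (a, b)) x.1 x.2 i j = DP i (DP j F) x :=
  congrFun (congrFun (Hpp_eq hF x.1 x.2) i) j
lemma Hpq_entry {F : EE n → ℝ} (hF : ContDiff ℝ (⊤ : ℕ∞) F) (x : EE n) (i j : Fin n) :
    Hpq (fun a b => F (a, b)) x.1 x.2 i j = DP i (DQ j F) x :=
  congrFun (congrFun (Hpq_eq hF x.1 x.2) i) j
lemma Hqp_entry {F : EE n → ℝ} (hF : ContDiff ℝ (⊤ : ℕ∞) F) (x : EE n) (i j : Fin n) :
    Hqp (fun a b => F (a, b)) x.1 x.2 i j = DQ i (DP j F) x :=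
  congrFun (congrFun (Hqp_eq hF x.1 x.2) i) j
lemma Hqq_entry {F : EE n → ℝ} (hF : ContDiff ℝ (⊤ : ℕ∞) F) (x : EE n) (i j : Fin n) :
    Hqq (fun a b => F (a, b)) x.1 x.2 i j = DQ i (DQ j F) x :=
  congrFun (congrFun (Hqq_eq hF x.1 x.2) i) j

lemma measurable_integrand {G : (Fin n → ℝ) → (Fin n → ℝ) → ℝ}
    (hG : ContDiff ℝ (⊤ : ℕ∞) fun x : EE n => G x.1 x.2) :
    Measurable fun x : EE n =>
      (Hqq G x.1 x.2 - Hqp G x.1 x.2 * (Hpp G x.1 x.2)⁻¹ * Hpq G x.1 x.2).trace := by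
  apply measurable_trace_expr
  · intro i j
    have he : (fun x : EE n => Hpp G x.1 x.2 i j)
        = DP i (DP j fun x : EE n => G x.1 x.2) := funext fun x => Hpp_entry hG x i j
    rw [he]
    exact (contDiff_DP (contDiff_DP hG j) i).continuous.measurable
  · intro i j
    have he : (fun x : EE n => Hqp G x.1 x.2 i j)
        = DQ i (DP j fun x : EE n => G x.1 x.2) := funext fun x => Hqp_entry hG x i j
    rw [he]
    exact (contDiff_DQ (contDiff_DP hG j) i).continuous.measurable
  · intro i j
    have he : (fun x : EE n => Hpq G x.1 x.2 i j)
        = DP i (DQ j fun x : EE n => G x.1 x.2) := funext fun x => Hpq_entry hG x i j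
    rw [he]
    exact (contDiff_DP (contDiff_DQ hG j) i).continuous.measurable
  · intro i j
    have he : (fun x : EE n => Hqq G x.1 x.2 i j)
        = DQ i (DQ j fun x : EE n => G x.1 x.2) := funext fun x => Hqq_entry hG x i j
    rw [he]
    exact (contDiff_DQ (contDiff_DQ hG j) i).continuous.measurable

end S16

/-- σ(H̃) = σ(H).  The Liouville measure μ̃ on {H̃ = 1/2} is the
image of the Liouville measure μ on {H = 1/2} under the fiberwise translation
(p,q) ↦ (p + α(q), q), which has Jacobian 1. -/
theorem stmt_16 {n : ℕ} (H : (Fin n → ℝ) → (Fin n → ℝ) → ℝ)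
    (hH : ContDiff ℝ (⊤ : ℕ∞) fun x : (Fin n → ℝ) × (Fin n → ℝ) => H x.1 x.2)
    (heven : ∀ p q, H (-p) q = H p q)
    (hinv : ∀ p q, H p q = 1 / 2 → IsUnit (Hpp H p q))
    (α : (Fin n → ℝ) → (Fin n → ℝ))
    (hα : ∀ i, ContDiff ℝ (⊤ : ℕ∞) fun q => α q i)
    (hαper : ∀ i, Zperiodic fun q => α q i)
    (Ht : (Fin n → ℝ) → (Fin n → ℝ) → ℝ)
    (hHt : Ht = fun p q => H (p - α q) q)
    (μ μt : Measure ((Fin n → ℝ) × (Fin n → ℝ)))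
    (hsupp : μ {x | H x.1 x.2 ≠ 1 / 2} = 0)
    (hsym : Measure.map (fun x : (Fin n → ℝ) × (Fin n → ℝ) => (-x.1, x.2)) μ = μ)
    (hμt : μt = Measure.map (fun x : (Fin n → ℝ) × (Fin n → ℝ) => (x.1 + α x.2, x.2)) μ)
    (hint1 : Integrable (fun x : (Fin n → ℝ) × (Fin n → ℝ) =>
      Matrix.trace (Hqq H x.1 x.2 - Hqp H x.1 x.2 * (Hpp H x.1 x.2)⁻¹ * Hpq H x.1 x.2)) μ)
    (hint2 : Integrable (fun x : (Fin n → ℝ) × (Fin n → ℝ) =>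
      ∑ k, ∑ i, pdP k H x.1 x.2 * pd i (pd i (fun y => α y k)) x.2) μ) :
    ∫ x, Matrix.trace
        (Hqq Ht x.1 x.2 - Hqp Ht x.1 x.2 * (Hpp Ht x.1 x.2)⁻¹ * Hpq Ht x.1 x.2) ∂μt =
      ∫ x, Matrix.trace
        (Hqq H x.1 x.2 - Hqp H x.1 x.2 * (Hpp H x.1 x.2)⁻¹ * Hpq H x.1 x.2) ∂μ := by
  subst hHt hμt
  have hα' : ContDiff ℝ (⊤ : ℕ∞) α := contDiff_pi.mpr hα
  have hFt : ContDiff ℝ (⊤ : ℕ∞) fun z : S16.EE n => H (z.1 - α z.2) z.2 :=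
    hH.comp (S16.contDiff_shf hα')
  have hTm : Measurable fun x : S16.EE n => ((x.1 + α x.2, x.2) : S16.EE n) :=
    (measurable_fst.add (hα'.continuous.measurable.comp measurable_snd)).prodMk measurable_snd
  have hmt : Measurable fun x : S16.EE n =>
      Matrix.trace (Hqq (fun p q => H (p - α q) q) x.1 x.2
        - Hqp (fun p q => H (p - α q) q) x.1 x.2
          * (Hpp (fun p q => H (p - α q) q) x.1 x.2)⁻¹
          * Hpq (fun p q => H (p - α q) q) x.1 x.2) :=
    S16.measurable_integrand hFt
  rw [MeasureTheory.integral_map hTm.aemeasurable hmt.aestronglyMeasurable]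
  have hae : ∀ᵐ x ∂μ, H x.1 x.2 = 1 / 2 := by
    rw [MeasureTheory.ae_iff]
    exact hsupp
  -- pointwise key identity
  have key : ∀ x : S16.EE n, H x.1 x.2 = 1 / 2 →
      Matrix.trace (Hqq (fun p q => H (p - α q) q) (x.1 + α x.2) x.2
        - Hqp (fun p q => H (p - α q) q) (x.1 + α x.2) x.2
          * (Hpp (fun p q => H (p - α q) q) (x.1 + α x.2) x.2)⁻¹
          * Hpq (fun p q => H (p - α q) q) (x.1 + α x.2) x.2)
      = Matrix.trace (Hqq H x.1 x.2 - Hqp H x.1 x.2 * (Hpp H x.1 x.2)⁻¹ * Hpq H x.1 x.2)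
        - ∑ k, ∑ i, pdP k H x.1 x.2 * pd i (pd i (fun y => α y k)) x.2 := by
    intro x hx
    set y : S16.EE n := (x.1 + α x.2, x.2) with hy
    have hsy : S16.shf α y = x := by
      apply Prod.ext
      · show x.1 + α x.2 - α x.2 = x.1
        exact add_sub_cancel_right _ _
      · rfl
    have e1 : Hpp (fun p q => H (p - α q) q) (x.1 + α x.2) x.2
        = S16.Am (fun z : S16.EE n => H z.1 z.2) x := by
      have h1 : Hpp (fun p q => H (p - α q) q) (x.1 + α x.2) x.2
          = S16.Am (fun z : S16.EE n => H (z.1 - α z.2) z.2) y := S16.Hpp_eq hFt y.1 y.2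
      have h2 : S16.Am (fun z : S16.EE n => H (z.1 - α z.2) z.2) y
          = S16.Am (fun z : S16.EE n => H z.1 z.2) (S16.shf α y) := S16.Am_shf hH hα' y
      rw [h1, h2, hsy]
    have e2 : Hqp (fun p q => H (p - α q) q) (x.1 + α x.2) x.2
        = S16.Bm (fun z : S16.EE n => H z.1 z.2) x
          - (Dmat α x.2)ᵀ * S16.Am (fun z : S16.EE n => H z.1 z.2) x := by
      have h1 : Hqp (fun p q => H (p - α q) q) (x.1 + α x.2) x.2
          = S16.Bm (fun z : S16.EE n => H (z.1 - α z.2) z.2) y := S16.Hqp_eq hFt y.1 y.2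
      have h2 : S16.Bm (fun z : S16.EE n => H (z.1 - α z.2) z.2) y
          = S16.Bm (fun z : S16.EE n => H z.1 z.2) (S16.shf α y)
            - (Dmat α x.2)ᵀ * S16.Am (fun z : S16.EE n => H z.1 z.2) (S16.shf α y) :=
        S16.Bm_shf hH hα' y
      rw [h1, h2, hsy]
    have e3 : Hpq (fun p q => H (p - α q) q) (x.1 + α x.2) x.2
        = S16.Cm (fun z : S16.EE n => H z.1 z.2) x
          - S16.Am (fun z : S16.EE n => H z.1 z.2) x * Dmat α x.2 := by
      have h1 : Hpq (fun p q => H (p - α q) q) (x.1 + α x.2) x.2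
          = S16.Cm (fun z : S16.EE n => H (z.1 - α z.2) z.2) y := S16.Hpq_eq hFt y.1 y.2
      have h2 : S16.Cm (fun z : S16.EE n => H (z.1 - α z.2) z.2) y
          = S16.Cm (fun z : S16.EE n => H z.1 z.2) (S16.shf α y)
            - S16.Am (fun z : S16.EE n => H z.1 z.2) (S16.shf α y) * Dmat α x.2 :=
        S16.Cm_shf hH hα' y
      rw [h1, h2, hsy]
    have e4 : Hqq (fun p q => H (p - α q) q) (x.1 + α x.2) x.2
        = S16.Qm (fun z : S16.EE n => H z.1 z.2) x
          - (Dmat α x.2)ᵀ * S16.Cm (fun z : S16.EE n => H z.1 z.2) x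
          - S16.Bm (fun z : S16.EE n => H z.1 z.2) x * Dmat α x.2
          + (Dmat α x.2)ᵀ * (S16.Am (fun z : S16.EE n => H z.1 z.2) x * Dmat α x.2)
          - S16.Mm (fun z : S16.EE n => H z.1 z.2) α x := by
      have h1 : Hqq (fun p q => H (p - α q) q) (x.1 + α x.2) x.2
          = S16.Qm (fun z : S16.EE n => H (z.1 - α z.2) z.2) y := S16.Hqq_eq hFt y.1 y.2
      have h2 : S16.Qm (fun z : S16.EE n => H (z.1 - α z.2) z.2) y
          = S16.Qm (fun z : S16.EE n => H z.1 z.2) (S16.shf α y)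
            - (Dmat α x.2)ᵀ * S16.Cm (fun z : S16.EE n => H z.1 z.2) (S16.shf α y)
            - S16.Bm (fun z : S16.EE n => H z.1 z.2) (S16.shf α y) * Dmat α x.2
            + (Dmat α x.2)ᵀ * (S16.Am (fun z : S16.EE n => H z.1 z.2) (S16.shf α y) * Dmat α x.2)
            - S16.Mm (fun z : S16.EE n => H z.1 z.2) α (S16.shf α y) :=
        S16.Qm_shf hH hα' y
      rw [h1, h2, hsy]
    have hunit : IsUnit (S16.Am (fun z : S16.EE n => H z.1 z.2) x) := by
      have h := hinv x.1 x.2 hx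
      rwa [show Hpp H x.1 x.2 = S16.Am (fun z : S16.EE n => H z.1 z.2) x from
        S16.Hpp_eq hH x.1 x.2] at h
    have f1 : Hpp H x.1 x.2 = S16.Am (fun z : S16.EE n => H z.1 z.2) x := S16.Hpp_eq hH x.1 x.2
    have f2 : Hqp H x.1 x.2 = S16.Bm (fun z : S16.EE n => H z.1 z.2) x := S16.Hqp_eq hH x.1 x.2
    have f3 : Hpq H x.1 x.2 = S16.Cm (fun z : S16.EE n => H z.1 z.2) x := S16.Hpq_eq hH x.1 x.2
    have f4 : Hqq H x.1 x.2 = S16.Qm (fun z : S16.EE n => H z.1 z.2) x := S16.Hqq_eq hH x.1 x.2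
    rw [e1, e2, e3, e4, f1, f2, f3, f4]
    rw [S16.trace_key _ _ _ _ _ _ hunit]
    congr 1
    -- trace (Mm) = double sum
    simp_rw [Matrix.trace, Matrix.diag_apply, S16.Mm, Matrix.of_apply]
    rw [Finset.sum_comm]
    refine Finset.sum_congr rfl fun k _ => Finset.sum_congr rfl fun i _ => ?_
    congr 1
    exact (S16.pdP_slice hH k x.1 x.2).symm
  -- oddness and measurability of the correction term
  have hpdPc : ∀ k : Fin n, Continuous fun x : S16.EE n => pdP k H x.1 x.2 := by
    intro k
    have he : (fun x : S16.EE n => pdP k H x.1 x.2)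
        = S16.DP k fun z : S16.EE n => H z.1 z.2 := funext fun x => S16.pdP_slice hH k x.1 x.2
    rw [he]
    exact (S16.contDiff_DP hH k).continuous
  have hgm : Measurable fun x : S16.EE n =>
      ∑ k, ∑ i, pdP k H x.1 x.2 * pd i (pd i (fun y => α y k)) x.2 := by
    refine Finset.measurable_sum _ fun k _ => Finset.measurable_sum _ fun i _ => ?_
    exact ((hpdPc k).measurable.mul
      (((S16.contDiff_pd (S16.contDiff_pd (hα k) i) i).continuous.comp continuous_snd).measurable))
  have hgodd : ∀ x : S16.EE n,
      (∑ k, ∑ i, pdP k H (-x.1) x.2 * pd i (pd i (fun y => α y k)) x.2)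
        = - ∑ k, ∑ i, pdP k H x.1 x.2 * pd i (pd i (fun y => α y k)) x.2 := by
    intro x
    simp_rw [S16.pdP_odd hH heven, neg_mul, Finset.sum_neg_distrib]
  calc ∫ x, Matrix.trace (Hqq (fun p q => H (p - α q) q) (x.1 + α x.2) x.2
        - Hqp (fun p q => H (p - α q) q) (x.1 + α x.2) x.2
          * (Hpp (fun p q => H (p - α q) q) (x.1 + α x.2) x.2)⁻¹
          * Hpq (fun p q => H (p - α q) q) (x.1 + α x.2) x.2) ∂μ
      = ∫ x, (Matrix.trace (Hqq H x.1 x.2 - Hqp H x.1 x.2 * (Hpp H x.1 x.2)⁻¹ * Hpq H x.1 x.2)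
          - ∑ k, ∑ i, pdP k H x.1 x.2 * pd i (pd i (fun y => α y k)) x.2) ∂μ :=
        integral_congr_ae (hae.mono fun x hx => key x hx)
    _ = (∫ x, Matrix.trace (Hqq H x.1 x.2 - Hqp H x.1 x.2 * (Hpp H x.1 x.2)⁻¹ * Hpq H x.1 x.2) ∂μ)
          - ∫ x, ∑ k, ∑ i, pdP k H x.1 x.2 * pd i (pd i (fun y => α y k)) x.2 ∂μ :=
        integral_sub hint1 hint2
    _ = ∫ x, Matrix.trace (Hqq H x.1 x.2 - Hqp H x.1 x.2 * (Hpp H x.1 x.2)⁻¹ * Hpq H x.1 x.2) ∂μ := by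
        rw [S16.integral_odd_zero hsym hgm (fun x => hgodd x), sub_zero]
end
end
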